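/- Let M, N ≥ 1 and let ψ : ℝ³ → Mat_{M,N}(ℝ), φ : ℝ³ → Mat_{N,M}(ℝ) be smooth functions of (x, y, t) satisfying the matrix derivative NLS system ψ_y = ψ_xx + 2ψ_xφψ, φ_y = −φ_xx + 2φψφ_x, together with its third-order symmetry ψ_t = ψ_xxx + 3ψ_xxφψ + 3ψ_xφψ_x + 3ψ_xφψφψ, φ_t = φ_xxx − 3φψφ_xx − 3φ_xψφ_x + 3φψφψφ_x. Then the N×N-matrix-valued functions f := φψ and p := φψ_x − φ_xψ + (φψ)² satisfy the matrix modified Kadomtsev–Petviashvili equation 4f_t = f_xxx + 3([f_xx, f] − 2f f_x f + p_y + [p, f²] + f_x p + p f_x) together with the constraint f_y = p_x + [p, f]. -/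

import Mathlib

noncomputable def pdx {V : Type*} [NormedAddCommGroup V] [NormedSpace ℝ V]
    (f : ℝ → ℝ → ℝ → V) : ℝ → ℝ → ℝ → V :=
  fun x y t => deriv (fun s => f s y t) x

noncomputable def pdy {V : Type*} [NormedAddCommGroup V] [NormedSpace ℝ V]
    (f : ℝ → ℝ → ℝ → V) : ℝ → ℝ → ℝ → V :=
  fun x y t => deriv (fun s => f x s t) y

noncomputable def pdt {V : Type*} [NormedAddCommGroup V] [NormedSpace ℝ V]
    (f : ℝ → ℝ → ℝ → V) : ℝ → ℝ → ℝ → V :=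
  fun x y t => deriv (fun s => f x y s) t

def mmul {M N K : ℕ} (A : Fin M → Fin N → ℝ) (B : Fin N → Fin K → ℝ) :
    Fin M → Fin K → ℝ :=
  fun i k => ∑ j, A i j * B j k

section Infra

variable {V : Type*} [NormedAddCommGroup V] [NormedSpace ℝ V]

def Sm (f : ℝ → ℝ → ℝ → V) : Prop :=
  ContDiff ℝ (⊤ : ℕ∞) (fun p : ℝ × ℝ × ℝ => f p.1 p.2.1 p.2.2)

theorem lineX (y t x : ℝ) : HasDerivAt (fun s : ℝ => (s, y, t)) ((1:ℝ), (0:ℝ), (0:ℝ)) x :=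
  HasDerivAt.prodMk (hasDerivAt_id x) (hasDerivAt_const x (y, t))

theorem lineY (x t y : ℝ) : HasDerivAt (fun s : ℝ => (x, s, t)) ((0:ℝ), (1:ℝ), (0:ℝ)) y :=
  HasDerivAt.prodMk (hasDerivAt_const y x) (HasDerivAt.prodMk (hasDerivAt_id y) (hasDerivAt_const y t))

theorem lineT (x y t : ℝ) : HasDerivAt (fun s : ℝ => (x, y, s)) ((0:ℝ), (0:ℝ), (1:ℝ)) t :=
  HasDerivAt.prodMk (hasDerivAt_const t x) (HasDerivAt.prodMk (hasDerivAt_const t y) (hasDerivAt_id t))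

theorem Sm.hdx {f : ℝ → ℝ → ℝ → V} (hf : Sm f) (x y t : ℝ) :
    HasDerivAt (fun s => f s y t) (pdx f x y t) x := by
  have h := ((hf.differentiable (by simp) (x, y, t)).hasFDerivAt).comp_hasDerivAt x (lineX y t x)
  exact h.differentiableAt.hasDerivAt

theorem Sm.hdy {f : ℝ → ℝ → ℝ → V} (hf : Sm f) (x y t : ℝ) :
    HasDerivAt (fun s => f x s t) (pdy f x y t) y := by
  have h := ((hf.differentiable (by simp) (x, y, t)).hasFDerivAt).comp_hasDerivAt y (lineY x t y)
  exact h.differentiableAt.hasDerivAt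

theorem Sm.hdt {f : ℝ → ℝ → ℝ → V} (hf : Sm f) (x y t : ℝ) :
    HasDerivAt (fun s => f x y s) (pdt f x y t) t := by
  have h := ((hf.differentiable (by simp) (x, y, t)).hasFDerivAt).comp_hasDerivAt t (lineT x y t)
  exact h.differentiableAt.hasDerivAt

theorem pdx_eq {f : ℝ → ℝ → ℝ → V} (hf : Sm f) (x y t : ℝ) :
    pdx f x y t = fderiv ℝ (fun p : ℝ × ℝ × ℝ => f p.1 p.2.1 p.2.2) (x, y, t) (1, 0, 0) :=
  (hf.hdx x y t).unique
    (by have h := ((hf.differentiable (by simp) (x, y, t)).hasFDerivAt).comp_hasDerivAt x (lineX y t x); exact h)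

theorem pdy_eq {f : ℝ → ℝ → ℝ → V} (hf : Sm f) (x y t : ℝ) :
    pdy f x y t = fderiv ℝ (fun p : ℝ × ℝ × ℝ => f p.1 p.2.1 p.2.2) (x, y, t) (0, 1, 0) :=
  (hf.hdy x y t).unique
    (by have h := ((hf.differentiable (by simp) (x, y, t)).hasFDerivAt).comp_hasDerivAt y (lineY x t y); exact h)

theorem Sm.smx {f : ℝ → ℝ → ℝ → V} (hf : Sm f) : Sm (pdx f) := by
  have h : (fun p : ℝ × ℝ × ℝ => pdx f p.1 p.2.1 p.2.2) =
      fun p => fderiv ℝ (fun q : ℝ × ℝ × ℝ => f q.1 q.2.1 q.2.2) p (1, 0, 0) := by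
    funext p
    exact pdx_eq hf p.1 p.2.1 p.2.2
  rw [Sm, h]
  exact (hf.fderiv_right (by simp)).clm_apply contDiff_const

theorem pdxy_comm {f : ℝ → ℝ → ℝ → V} (hf : Sm f) (x y t : ℝ) :
    pdx (pdy f) x y t = pdy (pdx f) x y t := by
  set F := fun p : ℝ × ℝ × ℝ => f p.1 p.2.1 p.2.2 with hF
  have hdF : ∀ p, HasFDerivAt F (fderiv ℝ F p) p :=
    fun p => (hf.differentiable (by simp) p).hasFDerivAt
  have hG : ContDiff ℝ (⊤ : ℕ∞) (fderiv ℝ F) := hf.fderiv_right (by simp)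
  have hdG : HasFDerivAt (fderiv ℝ F) (fderiv ℝ (fderiv ℝ F) (x, y, t)) (x, y, t) :=
    (hG.differentiable (by simp) _).hasFDerivAt
  have key := second_derivative_symmetric hdF hdG
    ((1:ℝ), (0:ℝ), (0:ℝ)) ((0:ℝ), (1:ℝ), (0:ℝ))
  have e1 : ∀ (v : ℝ × ℝ × ℝ), HasFDerivAt (fun p => fderiv ℝ F p v)
      ((ContinuousLinearMap.apply ℝ V v).comp (fderiv ℝ (fderiv ℝ F) (x, y, t))) (x, y, t) :=
    fun v => (ContinuousLinearMap.apply ℝ V v).hasFDerivAt.comp _ hdG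
  have hx : pdx (pdy f) x y t
      = fderiv ℝ (fderiv ℝ F) (x, y, t) (1, 0, 0) (0, 1, 0) := by
    show deriv (fun s => pdy f s y t) x = _
    have : (fun s => pdy f s y t) = fun s => fderiv ℝ F (s, y, t) ((0:ℝ), (1:ℝ), (0:ℝ)) := by
      funext s; exact pdy_eq hf s y t
    rw [this]
    exact ((e1 _).comp_hasDerivAt x (lineX y t x)).deriv
  have hy : pdy (pdx f) x y t
      = fderiv ℝ (fderiv ℝ F) (x, y, t) (0, 1, 0) (1, 0, 0) := by
    show deriv (fun s => pdx f x s t) y = _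
    have : (fun s => pdx f x s t) = fun s => fderiv ℝ F (x, s, t) ((1:ℝ), (0:ℝ), (0:ℝ)) := by
      funext s; exact pdx_eq hf x s t
    rw [this]
    exact ((e1 _).comp_hasDerivAt y (lineY x t y)).deriv
  rw [hx, hy]
  exact key

end Infra

section MmulLemmas

theorem hasDerivAt_mmul {a b c : ℕ} {u : ℝ → (Fin a → Fin b → ℝ)} {v : ℝ → (Fin b → Fin c → ℝ)}
    {u' : Fin a → Fin b → ℝ} {v' : Fin b → Fin c → ℝ} {x : ℝ}
    (hu : HasDerivAt u u' x) (hv : HasDerivAt v v' x) :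
    HasDerivAt (fun s => mmul (u s) (v s)) (mmul u' (v x) + mmul (u x) v') x := by
  have h : HasDerivAt (fun s => fun i k => ∑ j, u s i j * v s j k)
      (fun i k => ∑ j, (u' i j * v x j k + u x i j * v' j k)) x := by
    rw [hasDerivAt_pi]; intro i; rw [hasDerivAt_pi]; intro k
    exact HasDerivAt.fun_sum fun j _ =>
      (hasDerivAt_pi.1 (hasDerivAt_pi.1 hu i) j).mul (hasDerivAt_pi.1 (hasDerivAt_pi.1 hv j) k)
  have e2 : mmul u' (v x) + mmul (u x) v'
      = fun i k => ∑ j, (u' i j * v x j k + u x i j * v' j k) := by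
    funext i k
    simp [mmul, Finset.sum_add_distrib]
  rw [show (fun s => mmul (u s) (v s)) = (fun s => fun i k => ∑ j, u s i j * v s j k) from rfl,
    e2]
  exact h

variable {a b c d : ℕ}

theorem mmul_add (A : Fin a → Fin b → ℝ) (B C : Fin b → Fin c → ℝ) :
    mmul A (B + C) = mmul A B + mmul A C := by
  funext i k; simp [mmul, mul_add, Finset.sum_add_distrib]

theorem add_mmul (A B : Fin a → Fin b → ℝ) (C : Fin b → Fin c → ℝ) :
    mmul (A + B) C = mmul A C + mmul B C := by
  funext i k; simp [mmul, add_mul, Finset.sum_add_distrib]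

theorem mmul_sub (A : Fin a → Fin b → ℝ) (B C : Fin b → Fin c → ℝ) :
    mmul A (B - C) = mmul A B - mmul A C := by
  funext i k; simp [mmul, mul_sub, Finset.sum_sub_distrib]

theorem sub_mmul (A B : Fin a → Fin b → ℝ) (C : Fin b → Fin c → ℝ) :
    mmul (A - B) C = mmul A C - mmul B C := by
  funext i k; simp [mmul, sub_mul, Finset.sum_sub_distrib]

theorem mmul_smul (r : ℝ) (A : Fin a → Fin b → ℝ) (B : Fin b → Fin c → ℝ) :
    mmul A (r • B) = r • mmul A B := by
  funext i k; simp [mmul, Finset.mul_sum, mul_left_comm]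

theorem smul_mmul (r : ℝ) (A : Fin a → Fin b → ℝ) (B : Fin b → Fin c → ℝ) :
    mmul (r • A) B = r • mmul A B := by
  funext i k; simp [mmul, Finset.mul_sum, mul_assoc]

theorem mmul_neg (A : Fin a → Fin b → ℝ) (B : Fin b → Fin c → ℝ) :
    mmul A (-B) = -mmul A B := by
  funext i k; simp [mmul]

theorem neg_mmul (A : Fin a → Fin b → ℝ) (B : Fin b → Fin c → ℝ) :
    mmul (-A) B = -mmul A B := by
  funext i k; simp [mmul]

theorem mmul_assoc (A : Fin a → Fin b → ℝ) (B : Fin b → Fin c → ℝ) (C : Fin c → Fin d → ℝ) :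
    mmul (mmul A B) C = mmul A (mmul B C) := by
  funext i k
  simp only [mmul, Finset.sum_mul, Finset.mul_sum, mul_assoc]
  rw [Finset.sum_comm]

end MmulLemmas

def idm {M : ℕ} : Fin M → Fin M → ℝ := fun i j => if i = j then (1 : ℝ) else 0

def mcomm {M : ℕ} (A B : Fin M → Fin M → ℝ) : Fin M → Fin M → ℝ :=
  mmul A B - mmul B A

noncomputable def minv {M : ℕ} (A : Fin M → Fin M → ℝ) : Fin M → Fin M → ℝ :=
  (Matrix.of A)⁻¹

theorem matrix_DNLS_gives_matrix_mKP (M N : ℕ) (hM : 1 ≤ M) (hN : 1 ≤ N)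
    (ψ : ℝ → ℝ → ℝ → (Fin M → Fin N → ℝ)) (φ : ℝ → ℝ → ℝ → (Fin N → Fin M → ℝ))
    (hψ : ContDiff ℝ (⊤ : ℕ∞) (fun p : ℝ × ℝ × ℝ => ψ p.1 p.2.1 p.2.2))
    (hφ : ContDiff ℝ (⊤ : ℕ∞) (fun p : ℝ × ℝ × ℝ => φ p.1 p.2.1 p.2.2))
    (hDNLS₁ : ∀ x y t, pdy ψ x y t =
      pdx (pdx ψ) x y t + (2 : ℝ) • mmul (mmul (pdx ψ x y t) (φ x y t)) (ψ x y t))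
    (hDNLS₂ : ∀ x y t, pdy φ x y t =
      -pdx (pdx φ) x y t + (2 : ℝ) • mmul (mmul (φ x y t) (ψ x y t)) (pdx φ x y t))
    (hSym₁ : ∀ x y t, pdt ψ x y t = pdx (pdx (pdx ψ)) x y t
        + (3 : ℝ) • mmul (mmul (pdx (pdx ψ) x y t) (φ x y t)) (ψ x y t)
        + (3 : ℝ) • mmul (mmul (pdx ψ x y t) (φ x y t)) (pdx ψ x y t)
        + (3 : ℝ) • mmul (mmul (mmul (mmul (pdx ψ x y t) (φ x y t)) (ψ x y t)) (φ x y t)) (ψ x y t))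
    (hSym₂ : ∀ x y t, pdt φ x y t = pdx (pdx (pdx φ)) x y t
        - (3 : ℝ) • mmul (mmul (φ x y t) (ψ x y t)) (pdx (pdx φ) x y t)
        - (3 : ℝ) • mmul (mmul (pdx φ x y t) (ψ x y t)) (pdx φ x y t)
        + (3 : ℝ) • mmul (mmul (mmul (mmul (φ x y t) (ψ x y t)) (φ x y t)) (ψ x y t)) (pdx φ x y t))
    (f p : ℝ → ℝ → ℝ → (Fin N → Fin N → ℝ))
    (hf : ∀ x y t, f x y t = mmul (φ x y t) (ψ x y t))
    (hp : ∀ x y t, p x y t =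
      mmul (φ x y t) (pdx ψ x y t) - mmul (pdx φ x y t) (ψ x y t)
        + mmul (mmul (φ x y t) (ψ x y t)) (mmul (φ x y t) (ψ x y t))) :
    (∀ x y t, (4 : ℝ) • pdt f x y t =
      pdx (pdx (pdx f)) x y t
        + (3 : ℝ) • (mcomm (pdx (pdx f) x y t) (f x y t)
            - (2 : ℝ) • mmul (mmul (f x y t) (pdx f x y t)) (f x y t)
            + pdy p x y t + mcomm (p x y t) (mmul (f x y t) (f x y t))
            + mmul (pdx f x y t) (p x y t) + mmul (p x y t) (pdx f x y t))) ∧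
    (∀ x y t, pdy f x y t = pdx p x y t + mcomm (p x y t) (f x y t)) := by
  have Sψ : Sm ψ := hψ
  have Sφ : Sm φ := hφ
  have Sψ1 : Sm (pdx ψ) := Sψ.smx
  have Sψ2 : Sm (pdx (pdx ψ)) := Sψ1.smx
  have Sφ1 : Sm (pdx φ) := Sφ.smx
  have Sφ2 : Sm (pdx (pdx φ)) := Sφ1.smx
  have hfx : ∀ x y t, pdx f x y t =
      mmul (pdx φ x y t) (ψ x y t) + mmul (φ x y t) (pdx ψ x y t) := by
    intro x y t
    show deriv (fun s => f s y t) x = _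
    rw [show (fun s => f s y t) = fun s => mmul (φ s y t) (ψ s y t) from
      funext fun s => hf s y t]
    exact (hasDerivAt_mmul (Sφ.hdx x y t) (Sψ.hdx x y t)).deriv
  have hfxx : ∀ x y t, pdx (pdx f) x y t =
      (mmul (pdx (pdx φ) x y t) (ψ x y t) + mmul (pdx φ x y t) (pdx ψ x y t))
      + (mmul (pdx φ x y t) (pdx ψ x y t) + mmul (φ x y t) (pdx (pdx ψ) x y t)) := by
    intro x y t
    show deriv (fun s => pdx f s y t) x = _
    rw [show (fun s => pdx f s y t)
        = fun s => mmul (pdx φ s y t) (ψ s y t) + mmul (φ s y t) (pdx ψ s y t) from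
      funext fun s => hfx s y t]
    exact ((hasDerivAt_mmul (Sφ1.hdx x y t) (Sψ.hdx x y t)).add
      (hasDerivAt_mmul (Sφ.hdx x y t) (Sψ1.hdx x y t))).deriv
  have hfxxx : ∀ x y t, pdx (pdx (pdx f)) x y t =
      ((mmul (pdx (pdx (pdx φ)) x y t) (ψ x y t) + mmul (pdx (pdx φ) x y t) (pdx ψ x y t))
        + (mmul (pdx (pdx φ) x y t) (pdx ψ x y t) + mmul (pdx φ x y t) (pdx (pdx ψ) x y t)))
      + ((mmul (pdx (pdx φ) x y t) (pdx ψ x y t) + mmul (pdx φ x y t) (pdx (pdx ψ) x y t))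
        + (mmul (pdx φ x y t) (pdx (pdx ψ) x y t) + mmul (φ x y t) (pdx (pdx (pdx ψ)) x y t))) := by
    intro x y t
    show deriv (fun s => pdx (pdx f) s y t) x = _
    rw [show (fun s => pdx (pdx f) s y t)
        = fun s => (mmul (pdx (pdx φ) s y t) (ψ s y t) + mmul (pdx φ s y t) (pdx ψ s y t))
          + (mmul (pdx φ s y t) (pdx ψ s y t) + mmul (φ s y t) (pdx (pdx ψ) s y t)) from
      funext fun s => hfxx s y t]
    exact (((hasDerivAt_mmul (Sφ2.hdx x y t) (Sψ.hdx x y t)).add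
        (hasDerivAt_mmul (Sφ1.hdx x y t) (Sψ1.hdx x y t))).add
      ((hasDerivAt_mmul (Sφ1.hdx x y t) (Sψ1.hdx x y t)).add
        (hasDerivAt_mmul (Sφ.hdx x y t) (Sψ2.hdx x y t)))).deriv
  have hfy : ∀ x y t, pdy f x y t =
      mmul (pdy φ x y t) (ψ x y t) + mmul (φ x y t) (pdy ψ x y t) := by
    intro x y t
    show deriv (fun s => f x s t) y = _
    rw [show (fun s => f x s t) = fun s => mmul (φ x s t) (ψ x s t) from
      funext fun s => hf x s t]
    exact (hasDerivAt_mmul (Sφ.hdy x y t) (Sψ.hdy x y t)).deriv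
  have hft : ∀ x y t, pdt f x y t =
      mmul (pdt φ x y t) (ψ x y t) + mmul (φ x y t) (pdt ψ x y t) := by
    intro x y t
    show deriv (fun s => f x y s) t = _
    rw [show (fun s => f x y s) = fun s => mmul (φ x y s) (ψ x y s) from
      funext fun s => hf x y s]
    exact (hasDerivAt_mmul (Sφ.hdt x y t) (Sψ.hdt x y t)).deriv
  have hpx : ∀ x y t, pdx p x y t =
      (mmul (pdx φ x y t) (pdx ψ x y t) + mmul (φ x y t) (pdx (pdx ψ) x y t))
      - (mmul (pdx (pdx φ) x y t) (ψ x y t) + mmul (pdx φ x y t) (pdx ψ x y t))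
      + (mmul (mmul (pdx φ x y t) (ψ x y t) + mmul (φ x y t) (pdx ψ x y t))
            (mmul (φ x y t) (ψ x y t))
        + mmul (mmul (φ x y t) (ψ x y t))
            (mmul (pdx φ x y t) (ψ x y t) + mmul (φ x y t) (pdx ψ x y t))) := by
    intro x y t
    show deriv (fun s => p s y t) x = _
    rw [show (fun s => p s y t) = fun s =>
        mmul (φ s y t) (pdx ψ s y t) - mmul (pdx φ s y t) (ψ s y t)
          + mmul (mmul (φ s y t) (ψ s y t)) (mmul (φ s y t) (ψ s y t)) from
      funext fun s => hp s y t]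
    exact (((hasDerivAt_mmul (Sφ.hdx x y t) (Sψ1.hdx x y t)).sub
        (hasDerivAt_mmul (Sφ1.hdx x y t) (Sψ.hdx x y t))).add
      (hasDerivAt_mmul (hasDerivAt_mmul (Sφ.hdx x y t) (Sψ.hdx x y t))
        (hasDerivAt_mmul (Sφ.hdx x y t) (Sψ.hdx x y t)))).deriv
  have hpy : ∀ x y t, pdy p x y t =
      (mmul (pdy φ x y t) (pdx ψ x y t) + mmul (φ x y t) (pdy (pdx ψ) x y t))
      - (mmul (pdy (pdx φ) x y t) (ψ x y t) + mmul (pdx φ x y t) (pdy ψ x y t))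
      + (mmul (mmul (pdy φ x y t) (ψ x y t) + mmul (φ x y t) (pdy ψ x y t))
            (mmul (φ x y t) (ψ x y t))
        + mmul (mmul (φ x y t) (ψ x y t))
            (mmul (pdy φ x y t) (ψ x y t) + mmul (φ x y t) (pdy ψ x y t))) := by
    intro x y t
    show deriv (fun s => p x s t) y = _
    rw [show (fun s => p x s t) = fun s =>
        mmul (φ x s t) (pdx ψ x s t) - mmul (pdx φ x s t) (ψ x s t)
          + mmul (mmul (φ x s t) (ψ x s t)) (mmul (φ x s t) (ψ x s t)) from
      funext fun s => hp x s t]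
    exact (((hasDerivAt_mmul (Sφ.hdy x y t) (Sψ1.hdy x y t)).sub
        (hasDerivAt_mmul (Sφ1.hdy x y t) (Sψ.hdy x y t))).add
      (hasDerivAt_mmul (hasDerivAt_mmul (Sφ.hdy x y t) (Sψ.hdy x y t))
        (hasDerivAt_mmul (Sφ.hdy x y t) (Sψ.hdy x y t)))).deriv
  have hψ1y : ∀ x y t, pdy (pdx ψ) x y t =
      pdx (pdx (pdx ψ)) x y t
      + (2 : ℝ) • (mmul (mmul (pdx (pdx ψ) x y t) (φ x y t)
            + mmul (pdx ψ x y t) (pdx φ x y t)) (ψ x y t)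
        + mmul (mmul (pdx ψ x y t) (φ x y t)) (pdx ψ x y t)) := by
    intro x y t
    rw [← pdxy_comm Sψ x y t]
    show deriv (fun s => pdy ψ s y t) x = _
    rw [show (fun s => pdy ψ s y t) = fun s =>
        pdx (pdx ψ) s y t + (2 : ℝ) • mmul (mmul (pdx ψ s y t) (φ s y t)) (ψ s y t) from
      funext fun s => hDNLS₁ s y t]
    exact ((Sψ2.hdx x y t).add (HasDerivAt.const_smul (2 : ℝ)
      (hasDerivAt_mmul (hasDerivAt_mmul (Sψ1.hdx x y t) (Sφ.hdx x y t))
        (Sψ.hdx x y t)))).deriv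
  have hφ1y : ∀ x y t, pdy (pdx φ) x y t =
      -pdx (pdx (pdx φ)) x y t
      + (2 : ℝ) • (mmul (mmul (pdx φ x y t) (ψ x y t)
            + mmul (φ x y t) (pdx ψ x y t)) (pdx φ x y t)
        + mmul (mmul (φ x y t) (ψ x y t)) (pdx (pdx φ) x y t)) := by
    intro x y t
    rw [← pdxy_comm Sφ x y t]
    show deriv (fun s => pdy φ s y t) x = _
    rw [show (fun s => pdy φ s y t) = fun s =>
        -pdx (pdx φ) s y t + (2 : ℝ) • mmul (mmul (φ s y t) (ψ s y t)) (pdx φ s y t) from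
      funext fun s => hDNLS₂ s y t]
    exact (((Sφ2.hdx x y t).neg).add (HasDerivAt.const_smul (2 : ℝ)
      (hasDerivAt_mmul (hasDerivAt_mmul (Sφ.hdx x y t) (Sψ.hdx x y t))
        (Sφ1.hdx x y t)))).deriv
  constructor
  · intro x y t
    simp only [hft, hSym₁, hSym₂, hfxxx, hfxx, hfx, hpy, hψ1y, hφ1y, hDNLS₁, hDNLS₂,
      hp, hf, mcomm]
    simp only [mmul_assoc, mmul_add, add_mmul, mmul_sub, sub_mmul, mmul_smul, smul_mmul,
      mmul_neg, neg_mmul]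
    module
  · intro x y t
    simp only [hfy, hDNLS₁, hDNLS₂, hpx, hp, hf, mcomm]
    simp only [mmul_assoc, mmul_add, add_mmul, mmul_sub, sub_mmul, mmul_smul, smul_mmul,
      mmul_neg, neg_mmul]
    module
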